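/- arXiv:2602.08040 — 2 statements merged into one kernel-verified Lean document; each statement's English description precedes it below -/
import Mathlib

section
/- For a one-layer network: let Z ∈ ℝ^{n×d₀} be an input, σ a 1-Lipschitz elementwise activation with σ(0)=0, and W, W̃ ∈ ℝ^{d₀×d₁} weight matrices. Let H = σ(ZW), H̃ = σ(ZW̃), and assume m = min(‖H‖_F, ‖H̃‖_F) > 0. Then ‖HHᵀ/‖H‖_F² - H̃H̃ᵀ/‖H̃‖_F²‖_F ≤ (4‖Z‖_F/m)·‖W - W̃‖_F. -/
open Matrix

/-! The normalized covariance of `H` is the Gram matrix `U Uᵀ` of the unit-norm matrix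
`U = H / ‖H‖`, and `U Uᵀ - V Vᵀ = U (U - V)ᵀ + (U - V) Vᵀ` bounds the difference of two such Gram
matrices by `2 ‖U - V‖`. Normalization costs a factor `2 / m` on matrices of norm at least `m`,
and `‖H - H̃‖ ≤ ‖Z‖ ‖W - W̃‖` since `σ` is 1-Lipschitz and the Frobenius norm is submultiplicative.
-/

noncomputable def frobNorm {m n : Type*} [Fintype m] [Fintype n] (A : Matrix m n ℝ) : ℝ :=
  Real.sqrt (∑ i, ∑ j, (A i j) ^ 2)

attribute [local instance] Matrix.frobeniusSeminormedAddCommGroup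
  Matrix.frobeniusNormedAddCommGroup Matrix.frobeniusNormedSpace

lemma norm_inv_norm_smul_sub_inv_norm_smul_le {E : Type*} [NormedAddCommGroup E]
    [NormedSpace ℝ E] {x : E} (hx : x ≠ 0) (y : E) :
    ‖‖x‖⁻¹ • x - ‖y‖⁻¹ • y‖ ≤ 2 * ‖x - y‖ / ‖x‖ := by
  have hx' : 0 < ‖x‖ := norm_pos_iff.2 hx
  -- `‖y‖⁻¹ • y` lies in the unit ball and its coefficient is bounded by `‖x - y‖`
  have key : ‖x‖⁻¹ • x - ‖y‖⁻¹ • y = ‖x‖⁻¹ • ((x - y) + (‖y‖ - ‖x‖) • (‖y‖⁻¹ • y)) := by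
    rcases eq_or_ne y 0 with rfl | hy
    · simp
    · have : ‖y‖ * ‖y‖⁻¹ = 1 := mul_inv_cancel₀ (norm_ne_zero_iff.2 hy)
      rw [smul_smul, sub_mul, this, smul_add, smul_smul, mul_sub, mul_one, ← mul_assoc,
        inv_mul_cancel₀ hx'.ne', one_mul, sub_smul, smul_sub]
      abel
  have hball : ‖‖y‖⁻¹ • y‖ ≤ 1 := by simpa using inv_norm_smul_mem_unitClosedBall y
  calc ‖‖x‖⁻¹ • x - ‖y‖⁻¹ • y‖
      = ‖x‖⁻¹ * ‖(x - y) + (‖y‖ - ‖x‖) • (‖y‖⁻¹ • y)‖ := by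
        rw [key, norm_smul, norm_inv, norm_norm]
    _ ≤ ‖x‖⁻¹ * (‖x - y‖ + ‖x - y‖ * 1) := by
        gcongr
        refine (norm_add_le _ _).trans (add_le_add le_rfl ?_)
        rw [norm_smul]
        gcongr
        rw [Real.norm_eq_abs, abs_sub_comm]
        exact abs_norm_sub_norm_le x y
    _ = 2 * ‖x - y‖ / ‖x‖ := by ring

lemma norm_inv_norm_smul_sub_inv_norm_smul_le_min {E : Type*} [NormedAddCommGroup E]
    [NormedSpace ℝ E] {x y : E} (hx : x ≠ 0) (hy : y ≠ 0) :
    ‖‖x‖⁻¹ • x - ‖y‖⁻¹ • y‖ ≤ 2 * ‖x - y‖ / min ‖x‖ ‖y‖ := by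
  rcases min_choice ‖x‖ ‖y‖ with h | h <;> rw [h]
  · exact norm_inv_norm_smul_sub_inv_norm_smul_le hx y
  · rw [← norm_neg, neg_sub, norm_sub_rev x y]
    exact norm_inv_norm_smul_sub_inv_norm_smul_le hy x

namespace Matrix

lemma smul_mul_transpose_smul {m n R : Type*} [Fintype n] [CommRing R] (c : R)
    (A : Matrix m n R) :
    (c • A) * (c • A)ᵀ = c ^ 2 • (A * Aᵀ) := by
  rw [transpose_smul, Matrix.smul_mul, Matrix.mul_smul, smul_smul, sq]

variable {m n : Type*} [Fintype m] [Fintype n]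

lemma frobenius_norm_map_sub_map_le {α β : Type*} [SeminormedAddCommGroup α]
    [SeminormedAddCommGroup β] {K : NNReal} {f : α → β} (hf : LipschitzWith K f)
    (A B : Matrix m n α) : ‖A.map f - B.map f‖ ≤ K * ‖A - B‖ := by
  simp only [frobenius_norm_def, ← Real.sqrt_eq_rpow, Real.rpow_two]
  rw [← Real.sqrt_sq K.coe_nonneg, ← Real.sqrt_mul (sq_nonneg _), Finset.mul_sum]
  gcongr with i _
  rw [Finset.mul_sum]
  gcongr with j _
  rw [← mul_pow]
  exact pow_le_pow_left₀ (norm_nonneg _) (hf.norm_sub_le _ _) 2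

lemma frobenius_norm_mul_transpose_sub_le {α : Type*} [RCLike α] (A B : Matrix m n α) :
    ‖A * Aᵀ - B * Bᵀ‖ ≤ (‖A‖ + ‖B‖) * ‖A - B‖ := by
  have hsplit : A * Aᵀ - B * Bᵀ = A * (A - B)ᵀ + (A - B) * Bᵀ := by
    rw [transpose_sub, Matrix.mul_sub, Matrix.sub_mul]
    abel
  calc ‖A * Aᵀ - B * Bᵀ‖ ≤ ‖A * (A - B)ᵀ‖ + ‖(A - B) * Bᵀ‖ := hsplit ▸ norm_add_le _ _
    _ ≤ ‖A‖ * ‖(A - B)ᵀ‖ + ‖A - B‖ * ‖Bᵀ‖ :=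
        add_le_add (frobenius_norm_mul _ _) (frobenius_norm_mul _ _)
    _ = (‖A‖ + ‖B‖) * ‖A - B‖ := by
        rw [frobenius_norm_transpose, frobenius_norm_transpose]
        ring

lemma frobenius_norm_normalized_gram_sub_le {A B : Matrix m n ℝ} (hA : A ≠ 0) (hB : B ≠ 0) :
    ‖(‖A‖ ^ 2)⁻¹ • (A * Aᵀ) - (‖B‖ ^ 2)⁻¹ • (B * Bᵀ)‖ ≤ 4 * ‖A - B‖ / min ‖A‖ ‖B‖ := by
  set U := ‖A‖⁻¹ • A
  set V := ‖B‖⁻¹ • B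
  have hU : ‖U‖ = 1 := norm_smul_inv_norm hA
  have hV : ‖V‖ = 1 := norm_smul_inv_norm hB
  calc ‖(‖A‖ ^ 2)⁻¹ • (A * Aᵀ) - (‖B‖ ^ 2)⁻¹ • (B * Bᵀ)‖
      = ‖U * Uᵀ - V * Vᵀ‖ := by simp only [U, V, smul_mul_transpose_smul, inv_pow]
    _ ≤ 2 * ‖U - V‖ :=
        (frobenius_norm_mul_transpose_sub_le U V).trans_eq (by rw [hU, hV]; ring)
    _ ≤ 2 * (2 * ‖A - B‖ / min ‖A‖ ‖B‖) := by
        gcongr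
        exact norm_inv_norm_smul_sub_inv_norm_smul_le_min hA hB
    _ = 4 * ‖A - B‖ / min ‖A‖ ‖B‖ := by ring

end Matrix

lemma frobNorm_eq_norm {m n : Type*} [Fintype m] [Fintype n] (A : Matrix m n ℝ) :
    frobNorm A = ‖A‖ := by
  rw [frobNorm, frobenius_norm_def, Real.sqrt_eq_rpow]
  simp only [Real.norm_eq_abs, Real.rpow_two, sq_abs]

theorem stmt_5_general {n d₀ d₁ : ℕ} (Z : Matrix (Fin n) (Fin d₀) ℝ)
    (σ : ℝ → ℝ) (hσ : LipschitzWith 1 σ)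
    (W W' : Matrix (Fin d₀) (Fin d₁) ℝ)
    (H H' : Matrix (Fin n) (Fin d₁) ℝ)
    (hH : H = (Z * W).map σ) (hH' : H' = (Z * W').map σ)
    (m : ℝ) (hm : m = min (frobNorm H) (frobNorm H')) (hmpos : 0 < m) :
    frobNorm ((frobNorm H ^ 2)⁻¹ • (H * Hᵀ) - (frobNorm H' ^ 2)⁻¹ • (H' * H'ᵀ))
      ≤ (4 * frobNorm Z / m) * frobNorm (W - W') := by
  simp only [frobNorm_eq_norm] at hm ⊢
  subst hm
  have hHne : H ≠ 0 := norm_pos_iff.1 (hmpos.trans_le (min_le_left _ _))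
  have hH'ne : H' ≠ 0 := norm_pos_iff.1 (hmpos.trans_le (min_le_right _ _))
  have hHH' : ‖H - H'‖ ≤ ‖Z‖ * ‖W - W'‖ := by
    calc ‖H - H'‖ ≤ 1 * ‖Z * W - Z * W'‖ := hH ▸ hH' ▸ frobenius_norm_map_sub_map_le hσ _ _
      _ ≤ ‖Z‖ * ‖W - W'‖ := by rw [one_mul, ← Matrix.mul_sub]; exact frobenius_norm_mul _ _
  calc _ ≤ 4 * ‖H - H'‖ / min ‖H‖ ‖H'‖ := frobenius_norm_normalized_gram_sub_le hHne hH'ne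
    _ ≤ 4 * (‖Z‖ * ‖W - W'‖) / min ‖H‖ ‖H'‖ := by gcongr
    _ = _ := by ring

/-- One-layer network: with H = σ(ZW), H̃ = σ(ZW̃) and m = min(‖H‖_F, ‖H̃‖_F) > 0,
‖HHᵀ/‖H‖² - H̃H̃ᵀ/‖H̃‖²‖_F ≤ (4‖Z‖_F/m)‖W - W̃‖_F. -/
theorem stmt_5 {n d₀ d₁ : ℕ} (Z : Matrix (Fin n) (Fin d₀) ℝ)
    (σ : ℝ → ℝ) (hσ : LipschitzWith 1 σ) (hσ0 : σ 0 = 0)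
    (W W' : Matrix (Fin d₀) (Fin d₁) ℝ)
    (H H' : Matrix (Fin n) (Fin d₁) ℝ)
    (hH : H = (Z * W).map σ) (hH' : H' = (Z * W').map σ)
    (m : ℝ) (hm : m = min (frobNorm H) (frobNorm H')) (hmpos : 0 < m) :
    frobNorm ((frobNorm H ^ 2)⁻¹ • (H * Hᵀ) - (frobNorm H' ^ 2)⁻¹ • (H' * H'ᵀ))
      ≤ (4 * frobNorm Z / m) * frobNorm (W - W') :=
  stmt_5_general Z σ hσ W W' H H' hH hH' m hm hmpos
end

section
/- One step of the Newton–Schulz iteration contracts deviation from orthogonality: if X ∈ ℝ^{m×n} satisfies ‖XᵀX - I‖₂ = ε < 1, then Y = 1.5·X - 0.5·X(XᵀX) satisfies YᵀY - I = p(XᵀX) - I where the eigenvalues μ' of YᵀY relate to eigenvalues μ of XᵀX by μ' = μ(3-μ)²/4, and consequently ‖YᵀY - I‖₂ ≤ (3ε² + ε³)/4 ≤ ε². -/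
open Matrix

noncomputable def specNorm {m n : Type*} [Fintype m] [Fintype n] [DecidableEq n]
    (A : Matrix m n ℝ) : ℝ :=
  ‖LinearMap.toContinuousLinearMap (Matrix.toEuclideanLin A)‖

lemma specNorm_mul_le {n : Type*} [Fintype n] [DecidableEq n] (A B : Matrix n n ℝ) :
    specNorm (A * B) ≤ specNorm A * specNorm B := by
  have h : LinearMap.toContinuousLinearMap (Matrix.toEuclideanLin (A * B)) =
      (LinearMap.toContinuousLinearMap (Matrix.toEuclideanLin A)).comp
        (LinearMap.toContinuousLinearMap (Matrix.toEuclideanLin B)) := by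
    ext v
    simp [Matrix.toEuclideanLin, Matrix.mulVec_mulVec]
  rw [specNorm, h]
  exact ContinuousLinearMap.opNorm_comp_le _ _

lemma specNorm_sub_le {n : Type*} [Fintype n] [DecidableEq n] (A B : Matrix n n ℝ) :
    specNorm (A - B) ≤ specNorm A + specNorm B := by
  rw [specNorm, map_sub, map_sub]
  exact norm_sub_le _ _

lemma specNorm_smul {n : Type*} [Fintype n] [DecidableEq n] (c : ℝ) (A : Matrix n n ℝ) :
    specNorm (c • A) = |c| * specNorm A := by
  rw [specNorm, _root_.map_smul, _root_.map_smul]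
  rw [show ‖c • LinearMap.toContinuousLinearMap (toEuclideanLin A)‖ =
      ‖c‖ * ‖LinearMap.toContinuousLinearMap (toEuclideanLin A)‖ from
    norm_smul (β := EuclideanSpace ℝ n →L[ℝ] EuclideanSpace ℝ n) c _]
  rw [Real.norm_eq_abs]; rfl

lemma specNorm_nonneg {m n : Type*} [Fintype m] [Fintype n] [DecidableEq n]
    (A : Matrix m n ℝ) : 0 ≤ specNorm A := norm_nonneg _

lemma ns_poly_identity {n : Type*} [Fintype n] [DecidableEq n] (A : Matrix n n ℝ) :
    (1 / 4 : ℝ) • (A * ((3 : ℝ) • (1 : Matrix n n ℝ) - A) * ((3 : ℝ) • (1 : Matrix n n ℝ) - A))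
      - 1 = (1 / 4 : ℝ) • ((A - 1) * (A - 1) * (A - 1)) - (3 / 4 : ℝ) • ((A - 1) * (A - 1)) := by
  simp only [Matrix.sub_mul, Matrix.mul_sub, sub_mul, mul_sub, smul_sub, smul_add,
    Matrix.smul_mul, Matrix.mul_smul, smul_smul, Matrix.mul_one, Matrix.one_mul,
    Matrix.mul_assoc]
  module

/-- One Newton–Schulz step contracts deviation from orthogonality: if
‖XᵀX - I‖₂ = ε < 1 and Y = 1.5X - 0.5X(XᵀX), then YᵀY = XᵀX(3I - XᵀX)²/4, the
eigenvalues transform as μ ↦ μ(3-μ)²/4, and ‖YᵀY - I‖₂ ≤ (3ε² + ε³)/4 ≤ ε². -/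
theorem stmt_18 {m n : ℕ} (X : Matrix (Fin m) (Fin n) ℝ)
    (ε : ℝ) (hε : specNorm (Xᵀ * X - 1) = ε) (hε1 : ε < 1)
    (Y : Matrix (Fin m) (Fin n) ℝ)
    (hY : Y = (1.5 : ℝ) • X - (0.5 : ℝ) • (X * (Xᵀ * X))) :
    Yᵀ * Y = (1 / 4 : ℝ) •
        ((Xᵀ * X) * ((3 : ℝ) • (1 : Matrix (Fin n) (Fin n) ℝ) - Xᵀ * X)
          * ((3 : ℝ) • (1 : Matrix (Fin n) (Fin n) ℝ) - Xᵀ * X)) ∧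
      (∀ μ : ℝ, Module.End.HasEigenvalue (Matrix.toLin' (Xᵀ * X)) μ →
        Module.End.HasEigenvalue (Matrix.toLin' (Yᵀ * Y)) (μ * (3 - μ) ^ 2 / 4)) ∧
      specNorm (Yᵀ * Y - 1) ≤ (3 * ε ^ 2 + ε ^ 3) / 4 ∧
      (3 * ε ^ 2 + ε ^ 3) / 4 ≤ ε ^ 2 := by
  have h0 : 0 ≤ ε := hε ▸ specNorm_nonneg _
  have hYY : Yᵀ * Y = (1 / 4 : ℝ) •
      ((Xᵀ * X) * ((3 : ℝ) • (1 : Matrix (Fin n) (Fin n) ℝ) - Xᵀ * X)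
        * ((3 : ℝ) • (1 : Matrix (Fin n) (Fin n) ℝ) - Xᵀ * X)) := by
    subst hY
    simp only [transpose_sub, transpose_smul, transpose_mul, transpose_transpose]
    norm_num
    simp only [Matrix.sub_mul, Matrix.mul_sub, sub_mul, mul_sub, Matrix.smul_mul,
      Matrix.mul_smul, smul_sub, smul_smul, smul_add, Matrix.mul_one, Matrix.one_mul,
      Matrix.mul_assoc]
    module
  refine ⟨hYY, ?_, ?_, by nlinarith⟩
  · intro μ hμ
    obtain ⟨v, hv⟩ := hμ.exists_hasEigenvector
    refine Module.End.hasEigenvalue_of_hasEigenvector ⟨?_, hv.2⟩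
    have hAv : Matrix.toLin' (Xᵀ * X) v = μ • v := hv.apply_eq_smul
    have h3 : Matrix.toLin' ((3 : ℝ) • (1 : Matrix (Fin n) (Fin n) ℝ) - Xᵀ * X) v
        = (3 - μ) • v := by
      simp only [map_sub, _root_.map_smul, LinearMap.sub_apply, LinearMap.smul_apply,
        Matrix.toLin'_one, LinearMap.id_apply, hAv, sub_smul]
    rw [Module.End.mem_eigenspace_iff, hYY, _root_.map_smul, LinearMap.smul_apply,
      Matrix.toLin'_mul, LinearMap.comp_apply, h3, _root_.map_smul,
      Matrix.toLin'_mul, LinearMap.comp_apply, h3, _root_.map_smul, hAv,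
      smul_smul, smul_smul, smul_smul]
    congr 1; ring
  · set E : Matrix (Fin n) (Fin n) ℝ := Xᵀ * X - 1 with hE
    have key : Yᵀ * Y - 1 = (1 / 4 : ℝ) • (E * E * E) - (3 / 4 : ℝ) • (E * E) := by
      rw [hYY]; exact ns_poly_identity _
    have hEE : specNorm (E * E) ≤ ε * ε :=
      (specNorm_mul_le E E).trans (by rw [hε])
    have hEEE : specNorm (E * E * E) ≤ ε * ε * ε := by
      refine (specNorm_mul_le (E * E) E).trans ?_
      rw [hε]
      exact mul_le_mul_of_nonneg_right hEE h0
    calc specNorm (Yᵀ * Y - 1)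
        ≤ specNorm ((1 / 4 : ℝ) • (E * E * E)) + specNorm ((3 / 4 : ℝ) • (E * E)) := by
          rw [key]; exact specNorm_sub_le _ _
      _ = (1/4) * specNorm (E * E * E) + (3/4) * specNorm (E * E) := by
          rw [specNorm_smul, specNorm_smul, abs_of_nonneg (by norm_num : (0:ℝ) ≤ 1/4),
            abs_of_nonneg (by norm_num : (0:ℝ) ≤ 3/4)]
      _ ≤ (1/4) * (ε * ε * ε) + (3/4) * (ε * ε) := by
          gcongr
      _ = (3 * ε ^ 2 + ε ^ 3) / 4 := by ring
end
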